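/- Let H, K, G be Hilbert spaces and A ∈ L(H,G), B ∈ L(K,G). The following are equivalent: (i) the equation AX = B has a bounded solution X ∈ L(K,H); (ii) R(B) ⊆ R(A); (iii) there exists λ > 0 such that B B* ≤ λ A A*. In this case there is a unique solution D with R(D) ⊆ closure(R(A*)), and ‖D‖² = inf{λ > 0 : B B* ≤ λ A A*}. -/

import Mathlib

/-!
A bounded solution `X` of `A X = B` gives `‖B† g‖ ≤ ‖X‖ ‖A† g‖`, which is the operator inequality
`B B† ≤ ‖X‖² A A†`. Conversely, a bound `‖B† g‖ ≤ c ‖A† g‖` makes `A† g ↦ B† g` a well-defined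
operator of norm `≤ c` on `range A†`; extending it to the closure `V` of `range A†` and by zero on
`Vᗮ`, its adjoint `D` solves `A D = B`, has `‖D‖ ≤ c`, and takes values in `V = (ker A)ᗮ`.
A solution with values in `(ker A)ᗮ` is unique, so every admissible `λ` bounds `‖D‖²`, which gives
the norm formula. Range inclusion yields a bounded solution by the closed graph theorem applied to
`(A|_(ker A)ᗮ)⁻¹ ∘ B`.
-/

open ContinuousLinearMap

namespace ContinuousLinearMap

section ClosedGraph

variable {𝕜 K W G : Type*} [NontriviallyNormedField 𝕜]
  [NormedAddCommGroup K] [NormedSpace 𝕜 K] [CompleteSpace K]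
  [NormedAddCommGroup W] [NormedSpace 𝕜 W] [CompleteSpace W]
  [NormedAddCommGroup G] [NormedSpace 𝕜 G]

theorem exists_comp_eq_of_injective_of_range_le {A : W →L[𝕜] G} (hA : Function.Injective A)
    {B : K →L[𝕜] G}
    (h : LinearMap.range (B : K →ₗ[𝕜] G) ≤ LinearMap.range (A : W →ₗ[𝕜] G)) :
    ∃ X : K →L[𝕜] W, A ∘L X = B := by
  let X : K →ₗ[𝕜] W := (LinearEquiv.ofInjective (A : W →ₗ[𝕜] G) hA).symm ∘ₗ
    (B : K →ₗ[𝕜] G).codRestrict _ fun k => h ⟨k, rfl⟩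
  have hX : ∀ k, A (X k) = B k := fun k =>
    congrArg Subtype.val ((LinearEquiv.ofInjective _ hA).apply_symm_apply _)
  have hgraph : (X.graph : Set (K × W)) = {p | A p.2 = B p.1} := by
    ext p
    simp only [SetLike.mem_coe, LinearMap.mem_graph_iff, Set.mem_ofPred_eq, ← hX]
    exact hA.eq_iff.symm
  refine ⟨ofIsClosedGraph (g := X) ?_, ext hX⟩
  rw [hgraph]
  exact isClosed_eq (by fun_prop) (by fun_prop)

end ClosedGraph

section RangeInclusion

variable {𝕜 H K G : Type*} [RCLike 𝕜]
  [NormedAddCommGroup H] [InnerProductSpace 𝕜 H] [CompleteSpace H]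
  [NormedAddCommGroup K] [NormedSpace 𝕜 K] [CompleteSpace K]
  [NormedAddCommGroup G] [NormedSpace 𝕜 G]

theorem range_le_range_comp_orthogonal_ker_subtypeL (A : H →L[𝕜] G) :
    LinearMap.range (A : H →ₗ[𝕜] G) ≤ LinearMap.range
      ((A ∘L (LinearMap.ker (A : H →ₗ[𝕜] G))ᗮ.subtypeL :
        (LinearMap.ker (A : H →ₗ[𝕜] G))ᗮ →ₗ[𝕜] G)) := by
  rintro _ ⟨h, rfl⟩
  refine ⟨(LinearMap.ker (A : H →ₗ[𝕜] G))ᗮ.orthogonalProjectionOnto h, ?_⟩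
  have := Submodule.sub_starProjection_mem_orthogonal (K := (LinearMap.ker (A : H →ₗ[𝕜] G))ᗮ) h
  rw [Submodule.orthogonal_orthogonal, LinearMap.mem_ker, map_sub, sub_eq_zero] at this
  exact this.symm

theorem exists_comp_eq_of_range_le (A : H →L[𝕜] G) (B : K →L[𝕜] G)
    (h : LinearMap.range (B : K →ₗ[𝕜] G) ≤ LinearMap.range (A : H →ₗ[𝕜] G)) :
    ∃ X : K →L[𝕜] H, A ∘L X = B := by
  have hinj : Function.Injective (A ∘L (LinearMap.ker (A : H →ₗ[𝕜] G))ᗮ.subtypeL) :=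
    (injective_iff_map_eq_zero _).2 fun x hx =>
      Subtype.ext ((Submodule.orthogonal_disjoint _).le_bot ⟨hx, x.2⟩)
  obtain ⟨X, hX⟩ := exists_comp_eq_of_injective_of_range_le hinj
    (h.trans A.range_le_range_comp_orthogonal_ker_subtypeL)
  exact ⟨(LinearMap.ker (A : H →ₗ[𝕜] G))ᗮ.subtypeL ∘L X, by rw [← hX]; rfl⟩

end RangeInclusion

section Douglas

variable {𝕜 H K G : Type*} [RCLike 𝕜]
  [NormedAddCommGroup H] [InnerProductSpace 𝕜 H] [CompleteSpace H]
  [NormedAddCommGroup K] [InnerProductSpace 𝕜 K]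
  [NormedAddCommGroup G] [InnerProductSpace 𝕜 G] [CompleteSpace G]

def IsReducedSolution (A : H →L[𝕜] G) (B : K →L[𝕜] G) (D : K →L[𝕜] H) : Prop :=
  A ∘L D = B ∧
    LinearMap.range (D : K →ₗ[𝕜] H) ≤ (LinearMap.range (adjoint A : G →ₗ[𝕜] H)).topologicalClosure

theorem IsReducedSolution.eq {A : H →L[𝕜] G} {B : K →L[𝕜] G} {D₁ D₂ : K →L[𝕜] H}
    (h₁ : IsReducedSolution A B D₁) (h₂ : IsReducedSolution A B D₂) : D₁ = D₂ := by
  ext k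
  rw [← sub_eq_zero]
  have hker : D₁ k - D₂ k ∈ LinearMap.ker (A : H →ₗ[𝕜] G) := by
    simp only [LinearMap.mem_ker, coe_coe, map_sub, ← comp_apply, h₁.1, h₂.1, sub_self]
  have horth : D₁ k - D₂ k ∈ (LinearMap.ker (A : H →ₗ[𝕜] G))ᗮ := by
    rw [A.orthogonal_ker]
    exact sub_mem (h₁.2 ⟨k, rfl⟩) (h₂.2 ⟨k, rfl⟩)
  exact (Submodule.orthogonal_disjoint _).le_bot ⟨hker, horth⟩

variable [CompleteSpace K]

theorem isPositive_smul_comp_adjoint_sub_iff (A : H →L[𝕜] G) (B : K →L[𝕜] G) (lam : ℝ) :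
    ((lam : 𝕜) • (A ∘L adjoint A) - B ∘L adjoint B).IsPositive ↔
      ∀ g, ‖adjoint B g‖ ^ 2 ≤ lam * ‖adjoint A g‖ ^ 2 := by
  have hsa : IsSelfAdjoint ((lam : 𝕜) • (A ∘L adjoint A) - B ∘L adjoint B) :=
    (IsSelfAdjoint.smul (RCLike.conj_ofReal lam) (isPositive_self_comp_adjoint A).isSelfAdjoint).sub
      (isPositive_self_comp_adjoint B).isSelfAdjoint
  have hquad (g : G) : ((lam : 𝕜) • (A ∘L adjoint A) - B ∘L adjoint B).reApplyInnerSelf g =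
      lam * ‖adjoint A g‖ ^ 2 - ‖adjoint B g‖ ^ 2 := by
    rw [reApplyInnerSelf_apply, sub_apply, smul_apply, inner_sub_left, inner_smul_left, map_sub,
      comp_apply, comp_apply, ← adjoint_inner_right A, ← adjoint_inner_right B, RCLike.conj_ofReal,
      RCLike.re_ofReal_mul, inner_self_eq_norm_sq, inner_self_eq_norm_sq]
  simp only [isPositive_def', hsa, true_and, hquad, sub_nonneg]

theorem isPositive_smul_comp_adjoint_sub_iff_norm_le {A : H →L[𝕜] G} {B : K →L[𝕜] G} {lam : ℝ}
    (hlam : 0 ≤ lam) :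
    ((lam : 𝕜) • (A ∘L adjoint A) - B ∘L adjoint B).IsPositive ↔
      ∀ g, ‖adjoint B g‖ ≤ √lam * ‖adjoint A g‖ := by
  refine (isPositive_smul_comp_adjoint_sub_iff A B lam).trans (forall_congr' fun g => ?_)
  rw [← Real.le_sqrt (norm_nonneg _) (by positivity), Real.sqrt_mul hlam,
    Real.sqrt_sq (norm_nonneg _)]

theorem norm_adjoint_apply_le_of_comp_eq {A : H →L[𝕜] G} {B : K →L[𝕜] G} {X : K →L[𝕜] H}
    (hX : A ∘L X = B) (g : G) : ‖adjoint B g‖ ≤ ‖X‖ * ‖adjoint A g‖ := by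
  rw [← hX, adjoint_comp, comp_apply, ← adjoint.norm_map X]
  exact le_opNorm _ _

theorem isPositive_smul_comp_adjoint_sub_of_comp_eq {A : H →L[𝕜] G} {B : K →L[𝕜] G}
    {X : K →L[𝕜] H} (hX : A ∘L X = B) {lam : ℝ} (hlam : ‖X‖ ^ 2 ≤ lam) :
    ((lam : 𝕜) • (A ∘L adjoint A) - B ∘L adjoint B).IsPositive :=
  (isPositive_smul_comp_adjoint_sub_iff_norm_le ((sq_nonneg _).trans hlam)).2 fun g =>
    (norm_adjoint_apply_le_of_comp_eq hX g).trans <|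
      mul_le_mul_of_nonneg_right (Real.le_sqrt_of_sq_le hlam) (norm_nonneg _)

theorem exists_isReducedSolution_norm_le {A : H →L[𝕜] G} {B : K →L[𝕜] G} {c : ℝ} (hc : 0 ≤ c)
    (h : ∀ g, ‖adjoint B g‖ ≤ c * ‖adjoint A g‖) :
    ∃ D, IsReducedSolution A B D ∧ ‖D‖ ≤ c := by
  set V := (LinearMap.range (adjoint A : G →ₗ[𝕜] H)).topologicalClosure
  let e : G →ₗ[𝕜] V := (adjoint A : G →ₗ[𝕜] H).codRestrict V fun g =>
    Submodule.le_topologicalClosure _ (LinearMap.mem_range_self _ g)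
  have he : DenseRange e := by
    rw [DenseRange, Subtype.dense_iff, ← Set.range_comp]
    exact (Submodule.topologicalClosure_coe _).le
  let T : V →L[𝕜] K := (adjoint B : G →ₗ[𝕜] K).extendOfNorm e
  have hTe : ∀ g, T (e g) = adjoint B g :=
    LinearMap.extendOfNorm_eq (f := (adjoint B : G →ₗ[𝕜] K)) he ⟨c, h⟩
  refine ⟨adjoint (T ∘L V.orthogonalProjectionOnto), ⟨?_, ?_⟩, ?_⟩
  · apply adjoint.injective
    ext g
    rw [adjoint_comp, adjoint_adjoint]
    exact (congrArg T (V.orthogonalProjectionOnto_mem_subspace_eq_self (e g))).trans (hTe g)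
  · rw [adjoint_comp, Submodule.adjoint_orthogonalProjectionOnto]
    rintro _ ⟨k, rfl⟩
    exact (adjoint T k).2
  · calc ‖adjoint (T ∘L V.orthogonalProjectionOnto)‖
        = ‖T ∘L V.orthogonalProjectionOnto‖ := adjoint.norm_map _
      _ ≤ ‖T‖ * ‖V.orthogonalProjectionOnto‖ := opNorm_comp_le _ _
      _ ≤ c * 1 := by
        gcongr
        exacts [LinearMap.opNorm_extendOfNorm_le he hc h,
          Submodule.orthogonalProjectionOnto_norm_le V]
      _ = c := mul_one c

theorem IsReducedSolution.sq_norm_eq_sInf {A : H →L[𝕜] G} {B : K →L[𝕜] G} {D : K →L[𝕜] H}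
    (hD : IsReducedSolution A B D) :
    ‖D‖ ^ 2 = sInf {lam : ℝ | 0 < lam ∧
      ((lam : 𝕜) • (A ∘L adjoint A) - B ∘L adjoint B).IsPositive} := by
  have mem_of_lt (lam : ℝ) (hlam : ‖D‖ ^ 2 < lam) :
      0 < lam ∧ ((lam : 𝕜) • (A ∘L adjoint A) - B ∘L adjoint B).IsPositive :=
    ⟨(sq_nonneg _).trans_lt hlam, isPositive_smul_comp_adjoint_sub_of_comp_eq hD.1 hlam.le⟩
  refine (csInf_eq_of_forall_ge_of_forall_gt_exists_lt
    ⟨‖D‖ ^ 2 + 1, mem_of_lt _ (lt_add_one _)⟩ ?_ ?_).symm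
  · rintro lam ⟨hlam, hpos⟩
    obtain ⟨D', hD', hnorm⟩ := exists_isReducedSolution_norm_le (Real.sqrt_nonneg lam)
      ((isPositive_smul_comp_adjoint_sub_iff_norm_le hlam.le).1 hpos)
    rw [hD.eq hD']
    exact (Real.le_sqrt (norm_nonneg _) hlam.le).1 hnorm
  · intro w hw
    obtain ⟨lam, hlt, hlt'⟩ := exists_between hw
    exact ⟨lam, mem_of_lt lam hlt, hlt'⟩

end Douglas

end ContinuousLinearMap

theorem stmt_1
    {H K G : Type*}
    [NormedAddCommGroup H] [InnerProductSpace ℂ H] [CompleteSpace H]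
    [NormedAddCommGroup K] [InnerProductSpace ℂ K] [CompleteSpace K]
    [NormedAddCommGroup G] [InnerProductSpace ℂ G] [CompleteSpace G]
    (A : H →L[ℂ] G) (B : K →L[ℂ] G) :
    ((∃ X : K →L[ℂ] H, A ∘L X = B) ↔ LinearMap.range (B : K →ₗ[ℂ] G) ≤ LinearMap.range (A : H →ₗ[ℂ] G)) ∧
    ((∃ X : K →L[ℂ] H, A ∘L X = B) ↔
      ∃ lam : ℝ, 0 < lam ∧
        ((lam : ℂ) • (A ∘L adjoint A) - B ∘L adjoint B).IsPositive) ∧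
    (LinearMap.range (B : K →ₗ[ℂ] G) ≤ LinearMap.range (A : H →ₗ[ℂ] G) →
      (∃! D : K →L[ℂ] H, A ∘L D = B ∧
          LinearMap.range (D : K →ₗ[ℂ] H) ≤ (LinearMap.range (adjoint A : G →ₗ[ℂ] H)).topologicalClosure) ∧
      (∀ D : K →L[ℂ] H, A ∘L D = B →
        LinearMap.range (D : K →ₗ[ℂ] H) ≤ (LinearMap.range (adjoint A : G →ₗ[ℂ] H)).topologicalClosure →
        ‖D‖ ^ 2 = sInf {lam : ℝ | 0 < lam ∧
          ((lam : ℂ) • (A ∘L adjoint A) - B ∘L adjoint B).IsPositive})) := by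
  have solvable_iff_range_le : (∃ X : K →L[ℂ] H, A ∘L X = B) ↔
      LinearMap.range (B : K →ₗ[ℂ] G) ≤ LinearMap.range (A : H →ₗ[ℂ] G) :=
    ⟨fun ⟨X, hX⟩ => hX ▸ LinearMap.range_comp_le_range (X : K →ₗ[ℂ] H) (A : H →ₗ[ℂ] G),
      A.exists_comp_eq_of_range_le B⟩
  refine ⟨solvable_iff_range_le, ⟨fun ⟨X, hX⟩ => ?_, fun ⟨lam, hlam, hpos⟩ => ?_⟩, fun hr => ?_⟩
  · exact ⟨‖X‖ ^ 2 + 1, by positivity,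
      isPositive_smul_comp_adjoint_sub_of_comp_eq hX (le_add_of_nonneg_right zero_le_one)⟩
  · obtain ⟨D, hD, -⟩ := exists_isReducedSolution_norm_le (Real.sqrt_nonneg lam)
      ((isPositive_smul_comp_adjoint_sub_iff_norm_le hlam.le).1 hpos)
    exact ⟨D, hD.1⟩
  · obtain ⟨X, hX⟩ := solvable_iff_range_le.2 hr
    obtain ⟨D, hD, -⟩ :=
      exists_isReducedSolution_norm_le (norm_nonneg X) (norm_adjoint_apply_le_of_comp_eq hX)
    exact ⟨⟨D, hD, fun D' hD' => IsReducedSolution.eq hD' hD⟩,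
      fun D' h₁ h₂ => IsReducedSolution.sq_norm_eq_sInf ⟨h₁, h₂⟩⟩
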